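/- Let q be a prime power, α ∈ F_q^{n+1} with rank H_{n₁,n₂}(α) = r, and l+m-2 = n. Then dim ker H_{l,m}(α) = 0 if 1 ≤ m ≤ r, dim ker H_{l,m}(α) = m - r if r < m ≤ n+2-r, and dim ker H_{l,m}(α) = 2m - n - 2 if n+2-r < m ≤ n+1. -/
import Mathlib


open Matrix Polynomial

/-- The `l × m` Hankel matrix whose `(i,j)` entry (zero-indexed) is `α (i + j)`. -/
def hankel (F : Type) [Field F] (l m : ℕ) (α : ℕ → F) : Matrix (Fin l) (Fin m) F :=
  Matrix.of fun i j => α (i.1 + j.1)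

/-- `ρ(α)`: the largest `l ≤ n₁ = (n+2)/2` such that the top-left `l × l` Hankel matrix
of `α` is invertible (`0` if none exists). -/
noncomputable def rhoC (F : Type) [Field F] (n : ℕ) (α : ℕ → F) : ℕ :=
  sSup {l | l ≤ (n + 2) / 2 ∧ (hankel F l l α).det ≠ 0}

/-- `π(α) = rank H_{n₁,n₂}(α) - ρ(α)`. -/
noncomputable def piC (F : Type) [Field F] (n : ℕ) (α : ℕ → F) : ℕ :=
  (hankel F ((n + 2) / 2) ((n + 3) / 2) α).rank - rhoC F n α

/-- `deg B ≤ k` for an integer bound `k` (so `k < 0` forces `B = 0`). -/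
def degLE (F : Type) [Field F] (B : Polynomial F) (k : ℤ) : Prop :=
  ∀ i : ℕ, k < (i : ℤ) → B.coeff i = 0

/-- `A₁, A₂` are characteristic polynomials for the sequence `α` (of length `n+1`) with
first characteristic degree `c₁ = r` and second characteristic degree `c₂ = n+2-r`:
the kernels of all the Hankel matrices `H_{l,m}(α)`, `l+m-2 = n`, consist exactly of the
(coefficient vectors of) polynomials `B₁A₁ + B₂A₂` with `deg B₁ ≤ m - c₁ - 1` and
`deg B₂ ≤ m - c₂ - 1`. -/
def IsCharSeq (F : Type) [Field F] (n r : ℕ) (A₁ A₂ : Polynomial F) (α : ℕ → F) : Prop :=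
  ∀ l m : ℕ, 1 ≤ l → 1 ≤ m → l + m = n + 2 →
    {v : Fin m → F | (hankel F l m α).mulVec v = 0} =
    {v : Fin m → F | ∃ B₁ B₂ : Polynomial F,
      degLE F B₁ ((m : ℤ) - r - 1) ∧ degLE F B₂ ((m : ℤ) - ((n : ℤ) + 2 - r) - 1) ∧
      v = fun i : Fin m => (B₁ * A₁ + B₂ * A₂).coeff (i : ℕ)}

/-- A sequence `α ∈ F^{n+1}` viewed as a function `ℕ → F` (zero beyond index `n`). -/
def extSeq (F : Type) [Field F] (n : ℕ) (α : Fin (n + 1) → F) : ℕ → F :=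
  fun i => if h : i < n + 1 then α ⟨i, h⟩ else 0

/-- The extension of a sequence of length `n+1` by a new entry `c` at index `n+1`. -/
def extendSeq (F : Type) [Field F] (n : ℕ) (α : ℕ → F) (c : F) : ℕ → F :=
  fun i => if i = n + 1 then c else α i

private lemma hankel_transpose (F : Type) [Field F] (l m : ℕ) (α : ℕ → F) :
    (hankel F l m α)ᵀ = hankel F m l α := by
  ext i j; simp [hankel, Matrix.transpose_apply, Nat.add_comm]

private lemma hankel_rn (F : Type) [Field F] (l m : ℕ) (α : ℕ → F) :
    Module.finrank F (LinearMap.ker (hankel F l m α).mulVecLin) + (hankel F l m α).rank = m := by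
  have h := LinearMap.finrank_range_add_finrank_ker (hankel F l m α).mulVecLin
  rw [Module.finrank_fin_fun] at h
  unfold Matrix.rank
  omega

private lemma hankel_mirror (F : Type) [Field F] (l m : ℕ) (α : ℕ → F) :
    Module.finrank F (LinearMap.ker (hankel F l m α).mulVecLin) + l =
    Module.finrank F (LinearMap.ker (hankel F m l α).mulVecLin) + m := by
  have h1 := hankel_rn F l m α
  have h2 := hankel_rn F m l α
  have h3 : (hankel F m l α).rank = (hankel F l m α).rank := by
    rw [← hankel_transpose, Matrix.rank_transpose]
  omega

private lemma hankel_step (F : Type) [Field F] (l m : ℕ) (α : ℕ → F)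
    (h1 : 1 ≤ Module.finrank F (LinearMap.ker (hankel F (l+1) m α).mulVecLin)) :
    Module.finrank F (LinearMap.ker (hankel F (l+1) m α).mulVecLin) + 1 ≤
      Module.finrank F (LinearMap.ker (hankel F l (m+1) α).mulVecLin) := by
  set K := LinearMap.ker (hankel F (l+1) m α).mulVecLin with hK
  set K' := LinearMap.ker (hankel F l (m+1) α).mulVecLin with hK'
  -- shift map
  let S : (Fin m → F) →ₗ[F] (Fin (m+1) → F) :=
    { toFun := fun v => Fin.cons 0 v
      map_add' := by
        intro a b; funext i
        cases i using Fin.cases <;> simp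
      map_smul' := by
        intro c a; funext i
        cases i using Fin.cases <;> simp }
  -- pad map
  let E : (Fin m → F) →ₗ[F] (Fin (m+1) → F) :=
    { toFun := fun v => Fin.snoc v 0
      map_add' := by
        intro a b; funext i
        cases i using Fin.lastCases <;> simp
      map_smul' := by
        intro c a; funext i
        cases i using Fin.lastCases <;> simp }
  have hSmem : ∀ v ∈ K, S v ∈ K' := by
    intro v hv
    rw [LinearMap.mem_ker] at hv ⊢
    have hv' : ∀ i, (hankel F (l+1) m α).mulVec v i = 0 := fun i => congrFun hv i
    funext i
    show (hankel F l (m+1) α).mulVec (Fin.cons 0 v) i = 0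
    have : (hankel F l (m+1) α).mulVec (Fin.cons 0 v) i
        = (hankel F (l+1) m α).mulVec v i.succ := by
      simp only [Matrix.mulVec, dotProduct, hankel, Matrix.of_apply]
      rw [Fin.sum_univ_succ]
      simp only [Fin.cons_zero, mul_zero, zero_add, Fin.cons_succ]
      refine Finset.sum_congr rfl fun j _ => ?_
      congr 2
      simp [Fin.val_succ]; omega
    rw [this, hv']
  have hEmem : ∀ v ∈ K, E v ∈ K' := by
    intro v hv
    rw [LinearMap.mem_ker] at hv ⊢
    have hv' : ∀ i, (hankel F (l+1) m α).mulVec v i = 0 := fun i => congrFun hv i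
    funext i
    show (hankel F l (m+1) α).mulVec (Fin.snoc v 0) i = 0
    have : (hankel F l (m+1) α).mulVec (Fin.snoc v 0) i
        = (hankel F (l+1) m α).mulVec v i.castSucc := by
      simp only [Matrix.mulVec, dotProduct, hankel, Matrix.of_apply]
      rw [Fin.sum_univ_castSucc]
      simp only [Fin.snoc_castSucc, Fin.snoc_last, mul_zero, add_zero]
      refine Finset.sum_congr rfl fun j _ => ?_
      congr 2
    rw [this, hv']
  have hKs : K.map S ≤ K' := by
    rintro x ⟨v, hv, rfl⟩; exact hSmem v hv
  have hKe : K.map E ≤ K' := by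
    rintro x ⟨v, hv, rfl⟩; exact hEmem v hv
  have hinj : Function.Injective S := by
    intro a b h
    funext j
    have := congrFun h j.succ
    simpa [S] using this
  have hrankS : Module.finrank F (K.map S) = Module.finrank F K :=
    ((Submodule.equivMapOfInjective S hinj K).finrank_eq).symm
  have hne : ¬ K.map E ≤ K.map S := by
    intro hle
    have hzero : ∀ k, ∀ v ∈ K, ∀ hk : k < m, v ⟨k, hk⟩ = 0 := by
      intro k
      induction k with
      | zero =>
        intro v hv hk
        obtain ⟨w, hw, hSw⟩ := Submodule.mem_map.mp (hle (Submodule.mem_map_of_mem hv))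
        have hidx : (Fin.castSucc (⟨0, hk⟩ : Fin m)) = (0 : Fin (m+1)) := by
          ext; simp
        have := congrFun hSw (Fin.castSucc ⟨0, hk⟩)
        simp only [S, E, LinearMap.coe_mk, AddHom.coe_mk] at this
        rw [Fin.snoc_castSucc, hidx, Fin.cons_zero] at this
        exact this.symm
      | succ k ih =>
        intro v hv hk
        obtain ⟨w, hw, hSw⟩ := Submodule.mem_map.mp (hle (Submodule.mem_map_of_mem hv))
        have hk' : k < m := by omega
        have hidx : (Fin.castSucc (⟨k+1, hk⟩ : Fin m)) = Fin.succ ⟨k, hk'⟩ := by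
          ext; simp
        have := congrFun hSw (Fin.castSucc ⟨k+1, hk⟩)
        simp only [S, E, LinearMap.coe_mk, AddHom.coe_mk] at this
        rw [Fin.snoc_castSucc, hidx, Fin.cons_succ] at this
        rw [← this, ih w hw hk']
    have hbot : K = ⊥ := by
      rw [Submodule.eq_bot_iff]
      intro v hv
      funext i
      obtain ⟨i, hi⟩ := i
      exact hzero i v hv hi
    rw [hbot] at h1
    simp at h1
  have hlt : K.map S < K.map S ⊔ K.map E := left_lt_sup.mpr hne
  have h2 : Module.finrank F ↥(K.map S) < Module.finrank F ↥(K.map S ⊔ K.map E) :=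
    Submodule.finrank_lt_finrank_of_lt hlt
  have h3 : Module.finrank F ↥(K.map S ⊔ K.map E) ≤ Module.finrank F ↥K' :=
    Submodule.finrank_mono (sup_le hKs hKe)
  omega

private lemma hankel_upperG (F : Type) [Field F] (n r : ℕ) (α : ℕ → F)
    (hc : Module.finrank F
        (LinearMap.ker (hankel F ((n+2)/2) ((n+3)/2) α).mulVecLin) + r = (n+3)/2) :
    ∀ k m l, 1 ≤ m → l + m = n + 2 → m + k = (n+3)/2 →
      Module.finrank F (LinearMap.ker (hankel F l m α).mulVecLin) ≤ m - r := by
  intro k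
  induction k with
  | zero =>
    intro m l _ hlm hmk
    have hm : m = (n+3)/2 := by omega
    subst hm
    have hl : l = (n+2)/2 := by omega
    subst hl
    omega
  | succ k ih =>
    intro m l h1m hlm hmk
    by_cases h0 : Module.finrank F (LinearMap.ker (hankel F l m α).mulVecLin) = 0
    · omega
    · obtain ⟨l₀, rfl⟩ : ∃ l₀, l = l₀ + 1 := ⟨l - 1, by omega⟩
      have hstep := hankel_step F l₀ m α (by omega)
      have hih := ih (m+1) l₀ (by omega) (by omega) (by omega)
      omega

private lemma hankel_lowerG (F : Type) [Field F] (n r : ℕ) (α : ℕ → F)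
    (hc : Module.finrank F
        (LinearMap.ker (hankel F ((n+2)/2) ((n+3)/2) α).mulVecLin) + r = (n+3)/2)
    (hrn : r + 1 ≤ (n+3)/2) :
    ∀ k m l, 1 ≤ l → l + m = n + 2 → m = (n+3)/2 + k →
      m - r ≤ Module.finrank F (LinearMap.ker (hankel F l m α).mulVecLin) := by
  intro k
  induction k with
  | zero =>
    intro m l _ hlm hmk
    have hm : m = (n+3)/2 := by omega
    subst hm
    have hl : l = (n+2)/2 := by omega
    subst hl
    omega
  | succ k ih =>
    intro m l h1l hlm hmk
    obtain ⟨m₀, rfl⟩ : ∃ m₀, m = m₀ + 1 := ⟨m - 1, by omega⟩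
    have hih := ih m₀ (l+1) (by omega) (by omega) (by omega)
    have hstep := hankel_step F l m₀ α (by omega)
    omega

/-- dimension of the kernel of `H_{l,m}(α)` in terms of `m` and
`r = rank H_{n₁,n₂}(α)`. -/
theorem stmt_4 (F : Type) [Field F] [Fintype F] (n l m r : ℕ) (α : ℕ → F)
    (hl : 1 ≤ l) (hm : 1 ≤ m) (hlm : l + m = n + 2)
    (hr : (hankel F ((n + 2) / 2) ((n + 3) / 2) α).rank = r) :
    (m ≤ r → Module.finrank F (LinearMap.ker (hankel F l m α).mulVecLin) = 0) ∧
    (r < m → m ≤ n + 2 - r →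
      Module.finrank F (LinearMap.ker (hankel F l m α).mulVecLin) = m - r) ∧
    (n + 2 - r < m →
      Module.finrank F (LinearMap.ker (hankel F l m α).mulVecLin) = 2 * m - n - 2) := by
  have hrle : r ≤ (n+2)/2 := by
    rw [← hr]
    simpa using Matrix.rank_le_card_height (hankel F ((n+2)/2) ((n+3)/2) α)
  have hc : Module.finrank F
      (LinearMap.ker (hankel F ((n+2)/2) ((n+3)/2) α).mulVecLin) + r = (n+3)/2 := by
    have := hankel_rn F ((n+2)/2) ((n+3)/2) α
    omega
  have hmir := hankel_mirror F l m α
  refine ⟨?_, ?_, ?_⟩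
  · intro h1
    have := hankel_upperG F n r α hc ((n+3)/2 - m) m l hm hlm (by omega)
    omega
  · intro h1 h2
    rcases le_or_gt m ((n+2)/2) with hcse | hcse
    · have hup := hankel_upperG F n r α hc ((n+3)/2 - m) m l hm hlm (by omega)
      have hlow := hankel_lowerG F n r α hc (by omega) (l - (n+3)/2) l m hm (by omega)
        (by omega)
      omega
    · have hlow := hankel_lowerG F n r α hc (by omega) (m - (n+3)/2) m l hl hlm (by omega)
      have hup := hankel_upperG F n r α hc ((n+3)/2 - l) l m hl (by omega) (by omega)
      omega
  · intro h1
    have hup := hankel_upperG F n r α hc ((n+3)/2 - l) l m hl (by omega) (by omega)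
    omega
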